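/- The ZSDD interpretation ξ is a natural transformation from the ZSDD functor 𝒵 to 𝒫²: for every f : X → Y and every ZSDD α over X, ξ_Y(𝒵(f)(α)) = 𝒫²(f)(ξ_X(α)). -/
import Mathlib

/-- ZSDDs over X: terminals ⊥, ε, literals x, ±x, and decompositions. -/
inductive ZSDD (X : Type) where
  | bot : ZSDD X
  | eps : ZSDD X
  | lit (x : X) : ZSDD X
  | plit (x : X) : ZSDD X
  | decomp (l : List (ZSDD X × ZSDD X)) : ZSDD X

mutual
/-- Relabeling of ZSDDs (action of the functor 𝒵 on maps). -/
def Zmap {X Y : Type} (f : X → Y) : ZSDD X → ZSDD Y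
  | .bot => .bot
  | .eps => .eps
  | .lit x => .lit (f x)
  | .plit x => .plit (f x)
  | .decomp l => .decomp (ZmapList f l)

def ZmapList {X Y : Type} (f : X → Y) :
    List (ZSDD X × ZSDD X) → List (ZSDD Y × ZSDD Y)
  | [] => []
  | (p, s) :: rest => (Zmap f p, Zmap f s) :: ZmapList f rest
end

/-- The join P ⊔ Q = {A ∪ B | A ∈ P, B ∈ Q}. -/
def sjoin {X : Type} (P Q : Set (Set X)) : Set (Set X) :=
  Set.image2 (· ∪ ·) P Q

mutual
/-- ZSDD semantics ξ_X : 𝒵(X) → 𝒫²(X). -/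
def zsddSem {X : Type} : ZSDD X → Set (Set X)
  | .bot => ∅
  | .eps => {∅}
  | .lit x => {{x}}
  | .plit x => {∅, {x}}
  | .decomp l => zsddSemList l

/-- Semantics of a decomposition: ⋃ᵢ ξ(pᵢ) ⊔ ξ(sᵢ). -/
def zsddSemList {X : Type} : List (ZSDD X × ZSDD X) → Set (Set X)
  | [] => ∅
  | (p, s) :: rest => sjoin (zsddSem p) (zsddSem s) ∪ zsddSemList rest
end

/-- Double covariant power set functor action: double direct image. -/
def P2 {X Y : Type} (f : X → Y) (S : Set (Set X)) : Set (Set Y) := Set.image f '' S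

lemma P2_union {X Y : Type} (f : X → Y) (P Q : Set (Set X)) :
    P2 f (P ∪ Q) = P2 f P ∪ P2 f Q := Set.image_union _ _ _

lemma P2_sjoin {X Y : Type} (f : X → Y) (P Q : Set (Set X)) :
    P2 f (sjoin P Q) = sjoin (P2 f P) (P2 f Q) := by
  unfold P2 sjoin
  rw [Set.image_image2, Set.image2_image_left, Set.image2_image_right]
  simp [Set.image_union]

mutual
theorem zsdd_natural_aux {X Y : Type} (f : X → Y) (α : ZSDD X) :
    zsddSem (Zmap f α) = P2 f (zsddSem α) := by
  cases α with
  | bot => simp [Zmap, zsddSem, P2]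
  | eps => simp [Zmap, zsddSem, P2]
  | lit x => simp [Zmap, zsddSem, P2]
  | plit x => simp [Zmap, zsddSem, P2, Set.image_insert_eq]
  | decomp l => simpa [Zmap, zsddSem] using zsdd_natural_list f l

theorem zsdd_natural_list {X Y : Type} (f : X → Y) (l : List (ZSDD X × ZSDD X)) :
    zsddSemList (ZmapList f l) = P2 f (zsddSemList l) := by
  cases l with
  | nil => simp [ZmapList, zsddSemList, P2]
  | cons hd tl =>
    obtain ⟨p, s⟩ := hd
    rw [ZmapList, zsddSemList, zsddSemList, P2_union, P2_sjoin,
      zsdd_natural_aux f p, zsdd_natural_aux f s, zsdd_natural_list f tl]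
end

theorem zsdd_natural {X Y : Type} (f : X → Y) (α : ZSDD X) :
    zsddSem (Zmap f α) = P2 f (zsddSem α) := zsdd_natural_aux f α
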